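/- arXiv:0709.1135 — 4 statements merged into one kernel-verified Lean document; each statement's English description precedes it below -/
import Mathlib

section
/- Let r_k = α k^{−δ} with α > 0, δ > 0, and define s_k = r_k − (r_{k+1} − r_k)²/(r_{k+2} − 2r_{k+1} + r_k). Then s_k²/r_k² → 1/(δ+1)² as k → ∞. -/
open Filter Topology

/-! Aitken's Δ² transform is homogeneous, so with `h = 1/k` the ratio `s_k / r_k` is the
transform of the three values `g 1, g (1 + h), g (1 + 2h)` of `g x = x ^ (-δ)`. Divided by `h`
and `h²`, the first and second differences tend to `g' 1` and `g'' 1` (the latter by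
L'Hôpital), so the ratio tends to `g 1 - g' 1 ^ 2 / g'' 1 = 1 - δ² / (δ (δ + 1)) = 1 / (δ + 1)`. -/

noncomputable def aitkenDeltaSq (u₀ u₁ u₂ : ℝ) : ℝ :=
  u₀ - (u₁ - u₀) ^ 2 / (u₂ - 2 * u₁ + u₀)

lemma aitkenDeltaSq_mul (c u₀ u₁ u₂ : ℝ) :
    aitkenDeltaSq (c * u₀) (c * u₁) (c * u₂) = c * aitkenDeltaSq u₀ u₁ u₂ := by
  rcases eq_or_ne c 0 with rfl | hc
  · simp [aitkenDeltaSq]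
  have hsq : (c * u₁ - c * u₀) ^ 2 / (c * u₂ - 2 * (c * u₁) + c * u₀)
      = c * ((u₁ - u₀) ^ 2 / (u₂ - 2 * u₁ + u₀)) := by
    rw [show c * u₂ - 2 * (c * u₁) + c * u₀ = c * (u₂ - 2 * u₁ + u₀) by ring,
      ← mul_sub, mul_pow, mul_div_mul_comm, sq c, mul_self_div_self]
  rw [aitkenDeltaSq, aitkenDeltaSq, hsq, mul_sub]

lemma tendsto_const_mul_nhdsNE_zero {c : ℝ} (hc : c ≠ 0) :
    Tendsto (fun h : ℝ => c * h) (𝓝[≠] 0) (𝓝[≠] 0) := by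
  refine tendsto_nhdsWithin_of_tendsto_nhds_of_eventually_within _ ?_ ?_
  · simpa using ((continuous_const_mul c).tendsto 0).mono_left nhdsWithin_le_nhds
  · filter_upwards [self_mem_nhdsWithin] with h hh
    exact mul_ne_zero hc hh

theorem HasDerivAt.tendsto_secondDiff_div_sq {f f' : ℝ → ℝ} {a f'' : ℝ}
    (hf : ∀ᶠ x in 𝓝 a, HasDerivAt f (f' x) x) (hf' : HasDerivAt f' f'' a) :
    Tendsto (fun h => (f (a + 2 * h) - 2 * f (a + h) + f a) / h ^ 2) (𝓝[≠] 0) (𝓝 f'') := by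
  have hshift : ∀ c : ℝ, ∀ᶠ h in 𝓝 (0 : ℝ), HasDerivAt f (f' (a + c * h)) (a + c * h) := by
    intro c
    have : Tendsto (fun h : ℝ => a + c * h) (𝓝 0) (𝓝 a) := by
      simpa using ((continuous_const_mul c).const_add a).tendsto 0
    exact this.eventually hf
  apply HasDerivAt.lhopital_zero_nhdsNE (f' := fun h => 2 * f' (a + 2 * h) - 2 * f' (a + h))
    (g' := fun h => 2 * h)
  · filter_upwards [nhdsWithin_le_nhds ((hshift 2).and (hshift 1))] with h ⟨h2, h1⟩
    rw [one_mul] at h1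
    have d2 : HasDerivAt (fun x => f (a + 2 * x)) (f' (a + 2 * h) * 2) h :=
      h2.comp h (by simpa using ((hasDerivAt_id h).const_mul 2).const_add a)
    have d1 : HasDerivAt (fun x => f (a + x)) (f' (a + h)) h := h1.comp_const_add a h
    exact ((d2.sub (d1.const_mul 2)).add_const (f a)).congr_deriv (by ring)
  · exact Eventually.of_forall fun h => by simpa using hasDerivAt_pow 2 h
  · filter_upwards [self_mem_nhdsWithin] with h hh
    exact mul_ne_zero two_ne_zero hh
  · have hfa₂ : ContinuousAt f (a + 2 * 0) := by simpa using hf.self_of_nhds.continuousAt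
    have hfa₁ : ContinuousAt f (a + 0) := by simpa using hf.self_of_nhds.continuousAt
    have hcont : ContinuousAt (fun h : ℝ => f (a + 2 * h) - 2 * f (a + h) + f a) 0 := by
      fun_prop
    have := hcont.tendsto.mono_left (nhdsWithin_le_nhds (s := {0}ᶜ))
    simp only [mul_zero, add_zero] at this
    rwa [show f a - 2 * f a + f a = 0 by ring] at this
  · exact ((continuous_pow 2).tendsto' 0 0 (by simp)).mono_left nhdsWithin_le_nhds
  · -- `(f' (a + 2h) - f' (a + h)) / h` is twice a difference quotient of `f'` at `a` minus another
    have hslope := hf'.tendsto_slope_zero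
    have key := ((hslope.comp (tendsto_const_mul_nhdsNE_zero two_ne_zero)).const_mul 2).sub hslope
    rw [show 2 * f'' - f'' = f'' by ring] at key
    refine key.congr' ?_
    filter_upwards [self_mem_nhdsWithin] with h hh
    simp only [Function.comp_apply, smul_eq_mul]
    field_simp
    ring

theorem HasDerivAt.tendsto_aitkenDeltaSq {f f' : ℝ → ℝ} {a f'' : ℝ}
    (hf : ∀ᶠ x in 𝓝 a, HasDerivAt f (f' x) x) (hf' : HasDerivAt f' f'' a) (hf'' : f'' ≠ 0) :
    Tendsto (fun h => aitkenDeltaSq (f a) (f (a + h)) (f (a + 2 * h))) (𝓝[≠] 0)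
      (𝓝 (f a - f' a ^ 2 / f'')) := by
  have hslope := hf.self_of_nhds.tendsto_slope_zero
  refine (tendsto_const_nhds.sub ((hslope.pow 2).div
    (HasDerivAt.tendsto_secondDiff_div_sq hf hf') hf'')).congr' ?_
  filter_upwards [self_mem_nhdsWithin] with h hh
  have hh : h ≠ 0 := hh
  simp only [aitkenDeltaSq, Pi.div_apply, smul_eq_mul]
  rw [mul_pow, inv_pow, div_div_eq_mul_div, inv_mul_eq_div, div_mul_cancel₀ _ (pow_ne_zero 2 hh)]

lemma tendsto_aitkenDeltaSq_one_add_rpow {q : ℝ} (hq₀ : q ≠ 0) (hq₁ : q ≠ 1) :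
    Tendsto (fun h : ℝ => aitkenDeltaSq 1 ((1 + h) ^ q) ((1 + 2 * h) ^ q)) (𝓝[≠] 0)
      (𝓝 (1 - q)⁻¹) := by
  have hf : ∀ᶠ x in 𝓝 (1 : ℝ), HasDerivAt (fun x => x ^ q) (q * x ^ (q - 1)) x := by
    filter_upwards [eventually_ne_nhds one_ne_zero] with x hx
    exact Real.hasDerivAt_rpow_const (Or.inl hx)
  have hf' := (Real.hasDerivAt_rpow_const (p := q - 1) (Or.inl one_ne_zero)).const_mul q
  have hf'' : q * ((q - 1) * (1 : ℝ) ^ (q - 1 - 1)) ≠ 0 := by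
    simpa using ⟨hq₀, sub_ne_zero.mpr hq₁⟩
  convert HasDerivAt.tendsto_aitkenDeltaSq hf hf' hf'' using 2
  · simp
  · have : 1 - q ≠ 0 := sub_ne_zero.mpr hq₁.symm
    simp only [Real.one_rpow, mul_one]
    field_simp
    ring

lemma aitkenDeltaSq_rpow_add (q : ℝ) {x : ℝ} (hx : 0 < x) :
    aitkenDeltaSq (x ^ q) ((x + 1) ^ q) ((x + 2) ^ q)
      = x ^ q * aitkenDeltaSq 1 ((1 + x⁻¹) ^ q) ((1 + 2 * x⁻¹) ^ q) := by
  rw [← aitkenDeltaSq_mul, mul_one, ← Real.mul_rpow hx.le (by positivity),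
    ← Real.mul_rpow hx.le (by positivity)]
  congr 3 <;> field_simp

/-- For `r_k = α k^{−δ}` with `α, δ > 0` and
`s_k = r_k − (r_{k+1} − r_k)²/(r_{k+2} − 2r_{k+1} + r_k)`, one has
`s_k²/r_k² → 1/(δ+1)²` as `k → ∞`. -/
theorem stmt_13 (α δ : ℝ) (hα : 0 < α) (hδ : 0 < δ) (r s : ℕ → ℝ)
    (hr : ∀ k, r k = α * (k : ℝ) ^ (-δ))
    (hs : ∀ k, s k = r k - (r (k + 1) - r k) ^ 2
                        / (r (k + 2) - 2 * r (k + 1) + r k)) :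
    Tendsto (fun k : ℕ => (s k) ^ 2 / (r k) ^ 2) atTop (nhds (1 / (δ + 1) ^ 2)) := by
  have hinv : Tendsto (fun k : ℕ => (k : ℝ)⁻¹) atTop (𝓝[≠] 0) :=
    ((tendsto_inv_atTop_nhdsGT_zero.comp tendsto_natCast_atTop_atTop).mono_right
      (nhdsWithin_mono _ fun _ hx => ne_of_gt hx))
  have hlim := ((tendsto_aitkenDeltaSq_one_add_rpow (q := -δ) (by linarith) (by linarith)).comp
    hinv).pow 2
  rw [sub_neg_eq_add, inv_pow, ← one_div, add_comm] at hlim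
  refine hlim.congr' ?_
  filter_upwards [eventually_gt_atTop 0] with k hk
  have hk : (0 : ℝ) < k := Nat.cast_pos.mpr hk
  have hsk : s k = α * (k : ℝ) ^ (-δ) * aitkenDeltaSq 1 ((1 + (k : ℝ)⁻¹) ^ (-δ))
      ((1 + 2 * (k : ℝ)⁻¹) ^ (-δ)) := by
    rw [mul_assoc, ← aitkenDeltaSq_rpow_add _ hk, ← aitkenDeltaSq_mul, hs, hr, hr, hr]
    push_cast
    rfl
  rw [Function.comp_apply, hsk, hr, mul_pow, mul_div_cancel_left₀ _ (by positivity)]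
end

section
/- Let W be a standard Brownian motion, θ > 0, and for each integer k ≥ 1 let u_k(t) = u_k(0)·exp(−(θk² + 1/2)t + W(t)) with u_k(0) ≠ 0. Then for every T > 0 and all integers k ≠ n ≥ 1, θ = (1/(T(k² − n²)))·ln(u_n(T)u_k(0)/(u_k(T)u_n(0))). -/
/-! The noise `W(T)` and the Itô correction `-T/2` are common to all modes, so they cancel in
the ratio of the growth factors `u_n(T)/u_n(0)` and `u_k(T)/u_k(0)`, which is therefore
`exp(θ(k² − n²)T)`. -/

open Real

lemma mul_exp_div_mul_exp {a b : ℝ} (ha : a ≠ 0) (hb : b ≠ 0) (x y : ℝ) :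
    b * exp y * a / (a * exp x * b) = exp (y - x) := by
  rw [exp_sub]
  field_simp

lemma sq_sub_sq_ne_zero_of_ne {a b : ℕ} (hab : a ≠ b) : (a : ℝ) ^ 2 - (b : ℝ) ^ 2 ≠ 0 := by
  rw [sub_ne_zero, Ne, pow_left_inj₀ a.cast_nonneg b.cast_nonneg two_ne_zero]
  exact_mod_cast hab

theorem stmt_15_general (W : ℝ → ℝ) (hW0 : W 0 = 0) (θ : ℝ)
    (u0 : ℕ → ℝ) (hu0 : ∀ k, u0 k ≠ 0) (u : ℕ → ℝ → ℝ)
    (hu : ∀ k t, u k t = u0 k * Real.exp (-(θ * (k : ℝ) ^ 2 + 1 / 2) * t + W t))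
    (T : ℝ) (hT : 0 < T) (k n : ℕ) (hkn : k ≠ n) :
    θ = (1 / (T * ((k : ℝ) ^ 2 - (n : ℝ) ^ 2)))
          * Real.log (u n T * u k 0 / (u k T * u n 0)) := by
  have hinit : ∀ j, u j 0 = u0 j := fun j => by simp [hu, hW0]
  rw [hu n T, hu k T, hinit k, hinit n, mul_exp_div_mul_exp (hu0 k) (hu0 n), log_exp]
  have hsq := sq_sub_sq_ne_zero_of_ne hkn
  field_simp
  ring

/-- closed-form exact estimator (E3): with
`u_k(t) = u_k(0)·exp(−(θk² + 1/2)t + W(t))`, `W(0) = 0`, `u_k(0) ≠ 0`, `θ > 0`,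
for every `T > 0` and integers `k ≠ n`, `k, n ≥ 1`,
`θ = (1/(T(k² − n²)))·ln(u_n(T)u_k(0)/(u_k(T)u_n(0)))`. -/
theorem stmt_15 (W : ℝ → ℝ) (hW0 : W 0 = 0) (θ : ℝ) (hθ : 0 < θ)
    (u0 : ℕ → ℝ) (hu0 : ∀ k, u0 k ≠ 0) (u : ℕ → ℝ → ℝ)
    (hu : ∀ k t, u k t = u0 k * Real.exp (-(θ * (k : ℝ) ^ 2 + 1 / 2) * t + W t))
    (T : ℝ) (hT : 0 < T) (k n : ℕ) (hk : 1 ≤ k) (hn : 1 ≤ n) (hkn : k ≠ n) :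
    θ = (1 / (T * ((k : ℝ) ^ 2 - (n : ℝ) ^ 2)))
          * Real.log (u n T * u k 0 / (u k T * u n 0)) :=
  stmt_15_general W hW0 θ u0 hu0 u hu T hT k n hkn
end

section
/- Let W be a standard Brownian motion, θ > 0, and u_k(t) = u_k(0)·exp(−(θk² + 1/2)t + W(t)) with u_k(0) ≠ 0. Then for every fixed k ≥ 1, (1/(k²T))·ln(u_k(0)/u_k(T)) − 1/(2k²) → θ almost surely as T → ∞. -/
open MeasureTheory Filter Topology

theorem Real.log_mul_exp_div_mul_exp {c : ℝ} (hc : c ≠ 0) (x y : ℝ) :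
    Real.log (c * Real.exp x / (c * Real.exp y)) = x - y := by
  rw [mul_div_mul_left _ _ hc, ← Real.exp_sub, Real.log_exp]

theorem tendsto_mul_sub_div_atTop {f : ℝ → ℝ} (hf : Tendsto (fun T => f T / T) atTop (𝓝 0))
    (a : ℝ) : Tendsto (fun T => (a * T - f T) / T) atTop (𝓝 a) := by
  have h : Tendsto (fun T => a - f T / T) atTop (𝓝 a) := by
    simpa using hf.const_sub a
  refine h.congr' ?_
  filter_upwards [eventually_ne_atTop (0 : ℝ)] with T hT
  field_simp

theorem stmt_16_general {Ω : Type*} [MeasurableSpace Ω] (P : Measure Ω)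
    (W : ℝ → Ω → ℝ) (hW0 : ∀ ω, W 0 ω = 0)
    (hlln : ∀ᵐ ω ∂P, Tendsto (fun T : ℝ => W T ω / T) atTop (nhds 0))
    (θ : ℝ) (u0 : ℕ → ℝ) (hu0 : ∀ k, u0 k ≠ 0)
    (u : ℕ → ℝ → Ω → ℝ)
    (hu : ∀ k t ω, u k t ω = u0 k * Real.exp (-(θ * (k : ℝ) ^ 2 + 1 / 2) * t + W t ω))
    (k : ℕ) (hk : 1 ≤ k) :
    ∀ᵐ ω ∂P,
      Tendsto
        (fun T : ℝ => (1 / ((k : ℝ) ^ 2 * T)) * Real.log (u k 0 ω / u k T ω)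
                        - 1 / (2 * (k : ℝ) ^ 2))
        atTop (nhds θ) := by
  have hk2 : (k : ℝ) ^ 2 ≠ 0 := pow_ne_zero 2 (by exact_mod_cast Nat.one_le_iff_ne_zero.mp hk)
  set a := θ * (k : ℝ) ^ 2 + 1 / 2
  have hlog : ∀ T ω, Real.log (u k 0 ω / u k T ω) = a * T - W T ω := fun T ω => by
    rw [hu, hu, hW0, Real.log_mul_exp_div_mul_exp (hu0 k)]
    ring
  have hlim : a / (k : ℝ) ^ 2 - 1 / (2 * (k : ℝ) ^ 2) = θ := by
    field_simp
    ring
  filter_upwards [hlln] with ω hω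
  rw [← hlim]
  refine (((tendsto_mul_sub_div_atTop hω a).div_const _).sub_const _).congr fun T => ?_
  rw [hlog]
  ring

/-- estimator (E1): with
`u_k(t) = u_k(0)·exp(−(θk² + 1/2)t + W(t))` driven by a standard Brownian motion
(so that `W(0) = 0` and `W(T)/T → 0` a.s.), for every fixed `k ≥ 1`,
`(1/(k²T))·ln(u_k(0)/u_k(T)) − 1/(2k²) → θ` almost surely as `T → ∞`. -/
theorem stmt_16 {Ω : Type*} [MeasurableSpace Ω] (P : Measure Ω) [IsProbabilityMeasure P]
    (W : ℝ → Ω → ℝ) (hW0 : ∀ ω, W 0 ω = 0)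
    (hlln : ∀ᵐ ω ∂P, Tendsto (fun T : ℝ => W T ω / T) atTop (nhds 0))
    (θ : ℝ) (hθ : 0 < θ) (u0 : ℕ → ℝ) (hu0 : ∀ k, u0 k ≠ 0)
    (u : ℕ → ℝ → Ω → ℝ)
    (hu : ∀ k t ω, u k t ω = u0 k * Real.exp (-(θ * (k : ℝ) ^ 2 + 1 / 2) * t + W t ω))
    (k : ℕ) (hk : 1 ≤ k) :
    ∀ᵐ ω ∂P,
      Tendsto
        (fun T : ℝ => (1 / ((k : ℝ) ^ 2 * T)) * Real.log (u k 0 ω / u k T ω)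
                        - 1 / (2 * (k : ℝ) ^ 2))
        atTop (nhds θ) :=
  stmt_16_general P W hW0 hlln θ u0 hu0 u hu k hk
end

section
/- Let W_1,...,W_n be independent standard Brownian motions and for each index k let v_k(T) = −(ρ_k + θν_k + M_k/2)T + Σ_{j=1}^n μ_{jk}W_j(T). Suppose there exist two index sets (k_1^1,...,k_n^1), (k_1^2,...,k_n^2) and an index p ∈ {1,...,n} with Σ_{ℓ=1}^n ν_{k_ℓ^1}μ_{p k_ℓ^2} ≠ Σ_{ℓ=1}^n ν_{k_ℓ^2}μ_{p k_ℓ^1}. Then θ·Σ_{ℓ=1}^n (ν_{k_ℓ^2}μ_{p k_ℓ^1} − ν_{k_ℓ^1}μ_{p k_ℓ^2}) = (1/T)·Σ_{ℓ=1}^n ( μ_{p k_ℓ^2}v_{k_ℓ^1}(T) − μ_{p k_ℓ^1}v_{k_ℓ^2}(T) + T·μ_{p k_ℓ^2}(ρ_{k_ℓ^1} + M_{k_ℓ^1}/2) − T·μ_{p k_ℓ^1}(ρ_{k_ℓ^2} + M_{k_ℓ^2}/2) ); consequently θ is determined exactly by the observations {v_k(T)}. -/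
theorem wiener_terms_cancel (WT θ ρ₁ ρ₂ ν₁ ν₂ μ₁ μ₂ T : ℝ) :
    μ₂ * (-(ρ₁ + θ * ν₁ + μ₁ ^ 2 / 2) * T + μ₁ * WT)
        - μ₁ * (-(ρ₂ + θ * ν₂ + μ₂ ^ 2 / 2) * T + μ₂ * WT)
        + T * (μ₂ * (ρ₁ + μ₁ ^ 2 / 2) - μ₁ * (ρ₂ + μ₂ ^ 2 / 2))
      = θ * (T * (ν₂ * μ₁ - ν₁ * μ₂)) := by
  ring

/-- closed-form exact estimator, two-index one-Wiener-process
case, as sanctioned by the context: with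
`v_k(T) = −(ρ_k + θν_k + μ_k²/2)T + μ_k W(T)` for `k = 1, 2`, and
`ν₁μ₂ ≠ ν₂μ₁`, the parameter `θ` is determined exactly by the observations:
`θ = (μ₂v₁(T) − μ₁v₂(T) + T(μ₂(ρ₁ + μ₁²/2) − μ₁(ρ₂ + μ₂²/2)))/(T(ν₂μ₁ − ν₁μ₂))`.
The Wiener terms cancel, so this is a deterministic identity on each sample
path. -/
theorem stmt_18 (WT : ℝ) (θ : ℝ) (ρ₁ ρ₂ ν₁ ν₂ μ₁ μ₂ : ℝ)
    (hnd : ν₁ * μ₂ ≠ ν₂ * μ₁) (T : ℝ) (hT : 0 < T) (v₁ v₂ : ℝ)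
    (hv₁ : v₁ = -(ρ₁ + θ * ν₁ + μ₁ ^ 2 / 2) * T + μ₁ * WT)
    (hv₂ : v₂ = -(ρ₂ + θ * ν₂ + μ₂ ^ 2 / 2) * T + μ₂ * WT) :
    θ = (μ₂ * v₁ - μ₁ * v₂
          + T * (μ₂ * (ρ₁ + μ₁ ^ 2 / 2) - μ₁ * (ρ₂ + μ₂ ^ 2 / 2)))
        / (T * (ν₂ * μ₁ - ν₁ * μ₂)) := by
  have hden : T * (ν₂ * μ₁ - ν₁ * μ₂) ≠ 0 :=
    mul_ne_zero hT.ne' (sub_ne_zero.mpr hnd.symm)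
  rw [hv₁, hv₂, wiener_terms_cancel, mul_div_cancel_right₀ θ hden]
end
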